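/- arXiv:1707.06530 — 2 statements merged into one kernel-verified Lean document; each statement's English description precedes it below -/
import Mathlib

section
/- For every m ∈ [0,1], the sum of the three pairwise 3-setting steering quantities of the MDCC state equals at most 3: 2·((1-m²)/(1+m²))² + 1 + 8m²/(1+m²)² ≤ 3, with equality for all m (in fact the sum is identically 3). -/
theorem stmt7_general (m : ℝ) :
    2 * ((1 - m ^ 2) / (1 + m ^ 2)) ^ 2
        + (1 + 8 * m ^ 2 / (1 + m ^ 2) ^ 2) ≤ 3
    ∧ 2 * ((1 - m ^ 2) / (1 + m ^ 2)) ^ 2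
        + (1 + 8 * m ^ 2 / (1 + m ^ 2) ^ 2) = 3 := by
  have hpos : 1 + m ^ 2 ≠ 0 := by positivity
  -- After clearing denominators this is `(1 - m²)² + 4m² = (1 + m²)²`.
  have hsum : 2 * ((1 - m ^ 2) / (1 + m ^ 2)) ^ 2
      + (1 + 8 * m ^ 2 / (1 + m ^ 2) ^ 2) = 3 := by
    field_simp
    ring
  exact ⟨hsum.le, hsum⟩

theorem stmt7 (m : ℝ) (hm : m ∈ Set.Icc (0 : ℝ) 1) :
    2 * ((1 - m ^ 2) / (1 + m ^ 2)) ^ 2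
        + (1 + 8 * m ^ 2 / (1 + m ^ 2) ^ 2) ≤ 3
    ∧ 2 * ((1 - m ^ 2) / (1 + m ^ 2)) ^ 2
        + (1 + 8 * m ^ 2 / (1 + m ^ 2) ^ 2) = 3 :=
  stmt7_general m
end

section
/- Let λ₀,…,λ₄ be nonnegative reals with ∑λᵢ² = 1. At least two of the three conditions (i) 4λ₀²(λ₃² − λ₄²) > 0, (ii) 4λ₀²(λ₂² − λ₄²) > 0, (iii) (λ₂λ₃ − λ₁λ₄)² − (λ₀λ₄)² > 0 hold if and only if λ₀ ≠ 0 and [λ₄ < min{λ₂, λ₃}, or ((λ₂λ₃ − λ₁λ₄)² > (λ₀λ₄)² and λ₄ < max{λ₂, λ₃})]. -/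
/-!
For nonnegative amplitudes, `4 λ₀² (a² - λ₄²) > 0` says exactly `λ₀ ≠ 0 ∧ λ₄ < a`. After this
rewriting of conditions (i) and (ii), condition (iii) coincides with the first conjunct of the
second alternative, and the equivalence is propositional bookkeeping with `min` and `max`.
-/

theorem four_mul_sq_mul_sq_sub_sq_pos_iff {α : Type*} [Field α] [LinearOrder α]
    [IsStrictOrderedRing α] {a b : α} (c : α) (ha : 0 ≤ a) (hb : 0 ≤ b) :
    0 < 4 * c ^ 2 * (a ^ 2 - b ^ 2) ↔ c ≠ 0 ∧ b < a := by
  rcases eq_or_ne c 0 with rfl | hc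
  · simp
  · rw [mul_pos_iff_of_pos_left (by positivity), sub_pos, sq_lt_sq₀ hb ha]
    exact (and_iff_right hc).symm

theorem stmt12_general (l0 l1 l2 l3 l4 : ℝ)
    (hnn : 0 ≤ l0 ∧ 0 ≤ l1 ∧ 0 ≤ l2 ∧ 0 ≤ l3 ∧ 0 ≤ l4) :
    ((4 * l0 ^ 2 * (l3 ^ 2 - l4 ^ 2) > 0 ∧ 4 * l0 ^ 2 * (l2 ^ 2 - l4 ^ 2) > 0)
      ∨ (4 * l0 ^ 2 * (l3 ^ 2 - l4 ^ 2) > 0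
          ∧ (l2 * l3 - l1 * l4) ^ 2 - (l0 * l4) ^ 2 > 0)
      ∨ (4 * l0 ^ 2 * (l2 ^ 2 - l4 ^ 2) > 0
          ∧ (l2 * l3 - l1 * l4) ^ 2 - (l0 * l4) ^ 2 > 0))
    ↔ (l0 ≠ 0 ∧ (l4 < min l2 l3
        ∨ ((l2 * l3 - l1 * l4) ^ 2 > (l0 * l4) ^ 2 ∧ l4 < max l2 l3))) := by
  obtain ⟨-, -, h2, h3, h4⟩ := hnn
  simp only [gt_iff_lt, sub_pos,
    four_mul_sq_mul_sq_sub_sq_pos_iff l0 h2 h4, four_mul_sq_mul_sq_sub_sq_pos_iff l0 h3 h4,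
    lt_min_iff, lt_max_iff]
  tauto

theorem stmt12 (l0 l1 l2 l3 l4 : ℝ)
    (hnn : 0 ≤ l0 ∧ 0 ≤ l1 ∧ 0 ≤ l2 ∧ 0 ≤ l3 ∧ 0 ≤ l4)
    (hnorm : l0 ^ 2 + l1 ^ 2 + l2 ^ 2 + l3 ^ 2 + l4 ^ 2 = 1) :
    ((4 * l0 ^ 2 * (l3 ^ 2 - l4 ^ 2) > 0 ∧ 4 * l0 ^ 2 * (l2 ^ 2 - l4 ^ 2) > 0)
      ∨ (4 * l0 ^ 2 * (l3 ^ 2 - l4 ^ 2) > 0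
          ∧ (l2 * l3 - l1 * l4) ^ 2 - (l0 * l4) ^ 2 > 0)
      ∨ (4 * l0 ^ 2 * (l2 ^ 2 - l4 ^ 2) > 0
          ∧ (l2 * l3 - l1 * l4) ^ 2 - (l0 * l4) ^ 2 > 0))
    ↔ (l0 ≠ 0 ∧ (l4 < min l2 l3
        ∨ ((l2 * l3 - l1 * l4) ^ 2 > (l0 * l4) ^ 2 ∧ l4 < max l2 l3))) :=
  stmt12_general l0 l1 l2 l3 l4 hnn
end
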